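/- Under homoskedasticity (σ_j = σ_C for all controls, σ_t = σ_T for all treated) and a Lipschitz(λ) outcome function with caliper c on all matches, the conditional mean squared error satisfies CMSE = Bias^2 + Var ≤ (λc)^2 + σ_T^2/n_T + σ_C^2 Σ_{j∈C} (Σ_{t∈T} w_{jt})^2 / n_T^2 = (λc)^2 + σ_T^2/ESS(T) + σ_C^2/ESS(C). -/
import Mathlib


/-- CMSE bound under homoskedasticity: with Lipschitz(λ) outcome function,
caliper c on all matches, and convex matching weights,
CMSE = Bias² + Var ≤ (λc)² + σ_T²/n_T + σ_C² Σ_j (Σ_t w_{jt})² / n_T²,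
and the last term equals σ_C² / ESS(C) with
ESS(C) = (Σ_j Σ_t w_{jt})² / Σ_j (Σ_t w_{jt})². -/
theorem cmse_bias_variance_bound
    {p : ℕ} {ι κ : Type*} (T : Finset ι) (hT : T.Nonempty) (Cs : Finset κ)
    (X : ι → Fin p → ℝ) (Xc : κ → Fin p → ℝ)
    (d : (Fin p → ℝ) → (Fin p → ℝ) → ℝ) (hd0 : ∀ x y, 0 ≤ d x y)
    (f₀ : (Fin p → ℝ) → ℝ) (lam c σT σC : ℝ) (hlam : 0 ≤ lam)
    (hLip : ∀ x y, |f₀ x - f₀ y| ≤ lam * d x y)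
    (w : ι → κ → ℝ)
    (hw0 : ∀ t ∈ T, ∀ j ∈ Cs, 0 ≤ w t j)
    (hw1 : ∀ t ∈ T, ∑ j ∈ Cs, w t j = 1)
    (hcal : ∀ t ∈ T, ∀ j ∈ Cs, w t j ≠ 0 → d (X t) (Xc j) ≤ c) :
    ((T.card : ℝ)⁻¹ * ∑ t ∈ T, ∑ j ∈ Cs, w t j * (f₀ (X t) - f₀ (Xc j))) ^ 2
        + (σT ^ 2 / (T.card : ℝ)
          + σC ^ 2 * (∑ j ∈ Cs, (∑ t ∈ T, w t j) ^ 2) / (T.card : ℝ) ^ 2)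
      ≤ (lam * c) ^ 2 + σT ^ 2 / (T.card : ℝ)
          + σC ^ 2 * (∑ j ∈ Cs, (∑ t ∈ T, w t j) ^ 2) / (T.card : ℝ) ^ 2
    ∧ σC ^ 2 * (∑ j ∈ Cs, (∑ t ∈ T, w t j) ^ 2) / (T.card : ℝ) ^ 2
      = σC ^ 2 /
          ((∑ j ∈ Cs, ∑ t ∈ T, w t j) ^ 2 / ∑ j ∈ Cs, (∑ t ∈ T, w t j) ^ 2) := by
  have hn : (0:ℝ) < T.card := by
    exact_mod_cast Finset.card_pos.mpr hT
  -- c is nonnegative: some weight is nonzero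
  have hc : 0 ≤ c := by
    obtain ⟨t, ht⟩ := hT
    have h1 := hw1 t ht
    have : ∃ j ∈ Cs, w t j ≠ 0 := by
      by_contra h
      push_neg at h
      rw [Finset.sum_eq_zero h] at h1
      norm_num at h1
    obtain ⟨j, hj, hwj⟩ := this
    exact le_trans (hd0 (X t) (Xc j)) (hcal t ht j hj hwj)
  constructor
  · -- bias bound
    have key : ∀ t ∈ T, |∑ j ∈ Cs, w t j * (f₀ (X t) - f₀ (Xc j))| ≤ lam * c := by
      intro t ht
      calc |∑ j ∈ Cs, w t j * (f₀ (X t) - f₀ (Xc j))|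
          ≤ ∑ j ∈ Cs, |w t j * (f₀ (X t) - f₀ (Xc j))| := Finset.abs_sum_le_sum_abs _ _
        _ ≤ ∑ j ∈ Cs, w t j * (lam * c) := by
            apply Finset.sum_le_sum
            intro j hj
            rw [abs_mul, abs_of_nonneg (hw0 t ht j hj)]
            rcases eq_or_ne (w t j) 0 with h | h
            · simp [h]
            · apply mul_le_mul_of_nonneg_left _ (hw0 t ht j hj)
              exact le_trans (hLip (X t) (Xc j))
                (mul_le_mul_of_nonneg_left (hcal t ht j hj h) hlam)
        _ = lam * c := by rw [← Finset.sum_mul, hw1 t ht, one_mul]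
    have hB : |∑ t ∈ T, ∑ j ∈ Cs, w t j * (f₀ (X t) - f₀ (Xc j))|
        ≤ (T.card : ℝ) * (lam * c) := by
      calc |∑ t ∈ T, ∑ j ∈ Cs, w t j * (f₀ (X t) - f₀ (Xc j))|
          ≤ ∑ t ∈ T, |∑ j ∈ Cs, w t j * (f₀ (X t) - f₀ (Xc j))| :=
            Finset.abs_sum_le_sum_abs _ _
        _ ≤ ∑ _t ∈ T, lam * c := Finset.sum_le_sum key
        _ = (T.card : ℝ) * (lam * c) := by rw [Finset.sum_const, nsmul_eq_mul]
    have habs : |(T.card : ℝ)⁻¹ * ∑ t ∈ T, ∑ j ∈ Cs, w t j * (f₀ (X t) - f₀ (Xc j))|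
        ≤ lam * c := by
      rw [abs_mul, abs_of_nonneg (inv_nonneg.mpr hn.le)]
      calc (T.card : ℝ)⁻¹ * |∑ t ∈ T, ∑ j ∈ Cs, w t j * (f₀ (X t) - f₀ (Xc j))|
          ≤ (T.card : ℝ)⁻¹ * ((T.card : ℝ) * (lam * c)) :=
            mul_le_mul_of_nonneg_left hB (inv_nonneg.mpr hn.le)
        _ = lam * c := by field_simp
    have hsq : ((T.card : ℝ)⁻¹ * ∑ t ∈ T, ∑ j ∈ Cs, w t j * (f₀ (X t) - f₀ (Xc j))) ^ 2
        ≤ (lam * c) ^ 2 := by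
      rw [← sq_abs]
      exact pow_le_pow_left₀ (abs_nonneg _) habs 2
    linarith
  · -- ESS identity
    have hswap : (∑ j ∈ Cs, ∑ t ∈ T, w t j) = (T.card : ℝ) := by
      rw [Finset.sum_comm]
      rw [Finset.sum_congr rfl hw1, Finset.sum_const, nsmul_eq_mul, mul_one]
    rw [hswap]
    rcases eq_or_ne (∑ j ∈ Cs, (∑ t ∈ T, w t j) ^ 2) 0 with hS | hS
    · simp [hS]
    · field_simp
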